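/- Every straight stationary Bratteli–Vershik model (V,E,≥,ψ) has the nesting property: for every level n ≥ 0 and every vertex v ∈ V_{n+1}, there exists v' ∈ V_n such that ψ^{l(v)}(B(v)) ⊆ B(v'), where B(v) is the cylinder set of infinite paths whose initial segment to v is the minimal path, and l(v) is the number of finite paths from v₀ to v. -/
import Mathlib


/-- An edge is maximal in its range fiber. -/
def FibMax {𝒱 ℰ : Type} [PartialOrder ℰ] (rE : ℰ → 𝒱) (e : ℰ) : Prop :=
  ∀ e', rE e' = rE e → e' ≤ e

/-- An edge is minimal in its range fiber. -/
def FibMin {𝒱 ℰ : Type} [PartialOrder ℰ] (rE : ℰ → 𝒱) (e : ℰ) : Prop :=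
  ∀ e', rE e' = rE e → e ≤ e'

/-- `e'` is the (serial) successor of `e` in its range fiber. -/
def Serial {𝒱 ℰ : Type} [PartialOrder ℰ] (rE : ℰ → 𝒱) (e e' : ℰ) : Prop :=
  rE e' = rE e ∧ e < e' ∧ ∀ e'', rE e'' = rE e → e < e'' → e' ≤ e''

/-- The space `E_{0,∞}` of infinite paths of the stationary ordered Bratteli diagram
generated by a mono-graph `(𝒱,ℰ,s,r)` with `n v` edges from the root `v₀` to `(v,1)`:
a path is a level-one edge (a pair `(v,i)` with `i < n v`) together with a chained
sequence of edges of `ℰ` (levels `≥ 2`). -/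
abbrev PathSp {𝒱 : Type} (ℰ : Type) (sE rE : ℰ → 𝒱) (nv : 𝒱 → ℕ) : Type :=
  {p : ((v : 𝒱) × Fin (nv v)) × (ℕ → ℰ) //
    sE (p.2 0) = p.1.1 ∧ ∀ i, sE (p.2 (i + 1)) = rE (p.2 i)}

/-- A maximal infinite path: every edge is maximal in its fiber. -/
def IsMaxPath {𝒱 ℰ : Type} [PartialOrder ℰ] (sE rE : ℰ → 𝒱) (nv : 𝒱 → ℕ)
    (p : PathSp ℰ sE rE nv) : Prop :=
  ((p.1.1.2 : ℕ) + 1 = nv p.1.1.1) ∧ ∀ i, FibMax rE (p.1.2 i)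

/-- A minimal infinite path: every edge is minimal in its fiber. -/
def IsMinPath {𝒱 ℰ : Type} [PartialOrder ℰ] (sE rE : ℰ → 𝒱) (nv : 𝒱 → ℕ)
    (p : PathSp ℰ sE rE nv) : Prop :=
  ((p.1.1.2 : ℕ) = 0) ∧ ∀ i, FibMin rE (p.1.2 i)

/-- `q` is the lexicographic successor of the (non-maximal) path `p`. -/
def Succ {𝒱 ℰ : Type} [PartialOrder ℰ] (sE rE : ℰ → 𝒱) (nv : 𝒱 → ℕ)
    (p q : PathSp ℰ sE rE nv) : Prop :=
  ((p.1.1.2 : ℕ) + 1 < nv p.1.1.1 ∧ q.1.2 = p.1.2 ∧ q.1.1.1 = p.1.1.1 ∧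
    (q.1.1.2 : ℕ) = (p.1.1.2 : ℕ) + 1) ∨
  ((p.1.1.2 : ℕ) + 1 = nv p.1.1.1 ∧ ∃ k : ℕ,
    (∀ i, i < k → FibMax rE (p.1.2 i)) ∧ ¬ FibMax rE (p.1.2 k) ∧
    Serial rE (p.1.2 k) (q.1.2 k) ∧ (∀ i, k < i → q.1.2 i = p.1.2 i) ∧
    (∀ i, i < k → FibMin rE (q.1.2 i)) ∧ (q.1.1.2 : ℕ) = 0)

/-- Vertices carrying a maximal loop edge (`𝒱_{max,1}`). -/
def Vmax1 {𝒱 ℰ : Type} [PartialOrder ℰ] (sE rE : ℰ → 𝒱) : Set 𝒱 :=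
  {w | ∃ e, sE e = w ∧ rE e = w ∧ FibMax rE e}

/-- Vertices carrying a minimal loop edge (`𝒱_{min,1}`). -/
def Vmin1 {𝒱 ℰ : Type} [PartialOrder ℰ] (sE rE : ℰ → 𝒱) : Set 𝒱 :=
  {w | ∃ e, sE e = w ∧ rE e = w ∧ FibMin rE e}

/-- The vertex of the path `x` at level `k + 1`. -/
def vAt {𝒱 ℰ : Type} (sE rE : ℰ → 𝒱) (nv : 𝒱 → ℕ) (x : PathSp ℰ sE rE nv) :
    ℕ → 𝒱
  | 0 => x.1.1.1
  | (m + 1) => rE (x.1.2 m)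

/-- `lcount k v` is the number of finite paths from the root to the copy of `v`
at level `k + 1` of the stationary diagram. -/
def lcount {𝒱 ℰ : Type} [Fintype ℰ] [DecidableEq 𝒱] (sE rE : ℰ → 𝒱)
    (nv : 𝒱 → ℕ) : ℕ → 𝒱 → ℕ
  | 0, v => nv v
  | (k + 1), v => ∑ e : ℰ, if rE e = v then lcount sE rE nv k (sE e) else 0

/-- `Bset k v` is the base `B(v)` of the tower at level `k + 1`: the set of infinite
paths whose initial segment through level `k + 1` is the minimal path into `v`. -/
def Bset {𝒱 ℰ : Type} [PartialOrder ℰ] (sE rE : ℰ → 𝒱) (nv : 𝒱 → ℕ)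
    (k : ℕ) (v : 𝒱) : Set (PathSp ℰ sE rE nv) :=
  {x | (x.1.1.2 : ℕ) = 0 ∧ (∀ i, i < k → FibMin rE (x.1.2 i)) ∧
    vAt sE rE nv x k = v}

section Aux

variable {𝒱 ℰ : Type} [PartialOrder ℰ] {sE rE : ℰ → 𝒱} {nv : 𝒱 → ℕ}

lemma fibMax_unique {a b : ℰ} (ha : FibMax rE a) (hb : FibMax rE b) (h : rE a = rE b) : a = b :=
  le_antisymm (hb a h) (ha b h.symm)

lemma fibMin_unique {a b : ℰ} (ha : FibMin rE a) (hb : FibMin rE b) (h : rE a = rE b) : a = b :=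
  le_antisymm (ha b h.symm) (hb a h)

lemma serial_unique {f a b : ℰ} (ha : Serial rE f a) (hb : Serial rE f b) : a = b :=
  le_antisymm (ha.2.2 b hb.1 hb.2.1) (hb.2.2 a ha.1 ha.2.1)

lemma vAt_eq_sE (x : PathSp ℰ sE rE nv) (j : ℕ) : vAt sE rE nv x j = sE (x.1.2 j) := by
  cases j with
  | zero => exact x.2.1.symm
  | succ j => exact (x.2.2 j).symm

lemma minV_rE {minV : 𝒱 → 𝒱} (hminV : ∀ v, ∃ e, rE e = v ∧ FibMin rE e ∧ minV v = sE e)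
    {e : ℰ} (he : FibMin rE e) : minV (rE e) = sE e := by
  obtain ⟨e', h1, h2, h3⟩ := hminV (rE e)
  rw [h3, fibMin_unique h2 he h1]

lemma maxV_rE {maxV : 𝒱 → 𝒱} (hmaxV : ∀ v, ∃ e, rE e = v ∧ FibMax rE e ∧ maxV v = sE e)
    {e : ℰ} (he : FibMax rE e) : maxV (rE e) = sE e := by
  obtain ⟨e', h1, h2, h3⟩ := hmaxV (rE e)
  rw [h3, fibMax_unique h2 he h1]

lemma minV_fix {minV : 𝒱 → 𝒱} (hminV : ∀ v, ∃ e, rE e = v ∧ FibMin rE e ∧ minV v = sE e)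
    {w : 𝒱} (hw : w ∈ Vmin1 sE rE) : minV w = w := by
  obtain ⟨e, hse, hre, hmin⟩ := hw
  calc minV w = minV (rE e) := by rw [hre]
  _ = sE e := minV_rE hminV hmin
  _ = w := hse

/-- the single step of the minimal-chain argument -/
lemma min_chain {minV : 𝒱 → 𝒱} (hminV : ∀ v, ∃ e, rE e = v ∧ FibMin rE e ∧ minV v = sE e)
    (hmin1 : ∀ v, minV v ∈ Vmin1 sE rE)
    (q : PathSp ℰ sE rE nv) (m : ℕ) (hm : ∀ i, i < m → FibMin rE (q.1.2 i)) :
    ∀ j, j < m → vAt sE rE nv q j = minV (vAt sE rE nv q m) := by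
  have step : ∀ j, j < m → vAt sE rE nv q j = minV (vAt sE rE nv q (j + 1)) := by
    intro j hj
    have : vAt sE rE nv q (j+1) = rE (q.1.2 j) := rfl
    rw [this, minV_rE hminV (hm j hj), vAt_eq_sE]
  have key : ∀ d j, j + d + 1 = m → vAt sE rE nv q j = minV (vAt sE rE nv q m) := by
    intro d
    induction d with
    | zero => intro j hj; rw [← hj]; exact step j (by omega)
    | succ d ih =>
      intro j hj
      have h2 := ih (j+1) (by omega)
      calc vAt sE rE nv q j = minV (vAt sE rE nv q (j+1)) := step j (by omega)
      _ = minV (minV (vAt sE rE nv q m)) := by rw [h2]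
      _ = minV (vAt sE rE nv q m) := minV_fix hminV (hmin1 _)
  intro j hj
  exact key (m - j - 1) j (by omega)

end Aux
section Aux2
set_option linter.unusedSectionVars false
variable {𝒱 ℰ : Type} [PartialOrder ℰ] {sE rE : ℰ → 𝒱} {nv : 𝒱 → ℕ}

/-- The maximal path through a vertex with a maximal loop. -/
def pmax (e : ℰ) (hl : rE e = sE e) (h0 : 0 < nv (sE e)) : PathSp ℰ sE rE nv :=
  ⟨⟨⟨sE e, ⟨nv (sE e) - 1, Nat.sub_lt h0 Nat.one_pos⟩⟩, fun _ => e⟩, rfl, fun _ => hl.symm⟩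

lemma isMaxPath_pmax {e : ℰ} (hl : rE e = sE e) (h0 : 0 < nv (sE e)) (hm : FibMax rE e) :
    IsMaxPath sE rE nv (pmax e hl h0) :=
  ⟨Nat.succ_pred_eq_of_pos h0, fun _ => hm⟩

/-- Disambiguation of the successor relation at a path with maximal level-one index:
case 2 holds, and the witness `k` there is the first non-maximal index. -/
lemma succ_data {ψ : PathSp ℰ sE rE nv → PathSp ℰ sE rE nv}
    (hsucc : ∀ p, ¬ IsMaxPath sE rE nv p → Succ sE rE nv p (ψ p))
    (p : PathSp ℰ sE rE nv) (hnmax : ¬ IsMaxPath sE rE nv p)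
    (hieq : (p.1.1.2 : ℕ) + 1 = nv p.1.1.1) (k₀ : ℕ)
    (hb : ∀ i, i < k₀ → FibMax rE (p.1.2 i)) (hn : ¬ FibMax rE (p.1.2 k₀)) :
    ((ψ p).1.1.2 : ℕ) = 0 ∧ (∀ i, i < k₀ → FibMin rE ((ψ p).1.2 i)) ∧
      Serial rE (p.1.2 k₀) ((ψ p).1.2 k₀) ∧ ∀ i, k₀ < i → (ψ p).1.2 i = p.1.2 i := by
  rcases hsucc p hnmax with h1 | h2
  · omega
  · obtain ⟨-, k₁, hb1, hn1, hser, habove, hminq, hq0⟩ := h2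
    have hk : k₁ = k₀ := by
      rcases lt_trichotomy k₁ k₀ with h | h | h
      · exact absurd (hb k₁ h) hn1
      · exact h
      · exact absurd (hb1 k₀ h) hn
    subst hk
    exact ⟨hq0, hminq, hser, habove⟩

/-- Iterating `ψ` along the level-one fiber only increments the index. -/
lemma incr {ψ : PathSp ℰ sE rE nv → PathSp ℰ sE rE nv}
    (hsucc : ∀ p, ¬ IsMaxPath sE rE nv p → Succ sE rE nv p (ψ p))
    (x : PathSp ℰ sE rE nv) : ∀ j : ℕ, (x.1.1.2 : ℕ) + j + 1 ≤ nv x.1.1.1 →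
    (ψ^[j] x).1.1.1 = x.1.1.1 ∧ ((ψ^[j] x).1.1.2 : ℕ) = (x.1.1.2 : ℕ) + j ∧
      (ψ^[j] x).1.2 = x.1.2 := by
  intro j
  induction j with
  | zero => intro _; exact ⟨rfl, rfl, rfl⟩
  | succ j ih =>
    intro hj
    obtain ⟨h1, h2, h3⟩ := ih (by omega)
    set z := ψ^[j] x with hz
    have h4 : nv z.val.1.1 = nv x.val.1.1 := congrArg nv h1
    have hznm : ¬ IsMaxPath sE rE nv z := by
      intro hc
      have := hc.1
      omega
    have hs2 := hsucc z hznm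
    rcases hs2 with hc1 | hc2
    · rw [Function.iterate_succ_apply']
      refine ⟨hc1.2.2.1.trans h1, ?_, hc1.2.1.trans h3⟩
      rw [hc1.2.2.2, h2]; omega
    · exfalso; have := hc2.1; omega

end Aux2

section Count
set_option linter.unusedSectionVars false
variable {𝒱 ℰ : Type} [Fintype ℰ] [DecidableEq 𝒱] [PartialOrder ℰ] {sE rE : ℰ → 𝒱} {nv : 𝒱 → ℕ}

lemma lcount_pos (hr : Function.Surjective rE) (hnv : ∀ v, 0 < nv v) :
    ∀ k v, 0 < lcount sE rE nv k v := by
  intro k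
  induction k with
  | zero => exact hnv
  | succ k ih =>
    intro v
    obtain ⟨e₀, he₀⟩ := hr v
    calc 0 < lcount sE rE nv k (sE e₀) := ih _
    _ = if rE e₀ = v then lcount sE rE nv k (sE e₀) else 0 := by rw [if_pos he₀]
    _ ≤ ∑ e : ℰ, if rE e = v then lcount sE rE nv k (sE e) else 0 :=
        Finset.single_le_sum (f := fun e => if rE e = v then lcount sE rE nv k (sE e) else 0)
          (fun i _ => Nat.zero_le _) (Finset.mem_univ e₀)
    _ = lcount sE rE nv (k+1) v := rfl

open Classical in
/-- The number of paths through an edge `e` into `u` or any later edge of the fiber of `u`. -/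
noncomputable def Rsum (sE rE : ℰ → 𝒱) (nv : 𝒱 → ℕ) (k : ℕ) (u : 𝒱) (e : ℰ) : ℕ :=
  ∑ e' ∈ Finset.univ.filter (fun e' => rE e' = u ∧ e ≤ e'), lcount sE rE nv k (sE e')

open Classical in
lemma Rsum_max {e : ℰ} {u : 𝒱} (he : rE e = u) (hm : FibMax rE e) (k : ℕ) :
    Rsum sE rE nv k u e = lcount sE rE nv k (sE e) := by
  have : Finset.univ.filter (fun e' => rE e' = u ∧ e ≤ e') = {e} := by
    ext e''
    simp only [Finset.mem_filter, Finset.mem_univ, true_and, Finset.mem_singleton]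
    constructor
    · rintro ⟨h1, h2⟩
      exact le_antisymm (hm e'' (h1.trans he.symm)) h2
    · rintro rfl; exact ⟨he, le_rfl⟩
  rw [Rsum, this, Finset.sum_singleton]

open Classical in
lemma Rsum_pos (hr : Function.Surjective rE) (hnv : ∀ v, 0 < nv v)
    {e : ℰ} {u : 𝒱} (he : rE e = u) (k : ℕ) : 0 < Rsum sE rE nv k u e := by
  calc 0 < lcount sE rE nv k (sE e) := lcount_pos hr hnv _ _
  _ ≤ Rsum sE rE nv k u e := by
      rw [Rsum]
      refine Finset.single_le_sum (f := fun e' => lcount sE rE nv k (sE e'))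
        (fun i _ => Nat.zero_le _) ?_
      simp only [Finset.mem_filter, Finset.mem_univ, true_and]
      exact ⟨he, le_rfl⟩

open Classical in
lemma Rsum_step {e f' : ℰ} {u : 𝒱} (he : rE e = u) (hser : Serial rE e f') (k : ℕ) :
    Rsum sE rE nv k u e = lcount sE rE nv k (sE e) + Rsum sE rE nv k u f' := by
  have hset : Finset.univ.filter (fun e' => rE e' = u ∧ e ≤ e')
      = insert e (Finset.univ.filter (fun e' => rE e' = u ∧ f' ≤ e')) := by
    ext e''
    simp only [Finset.mem_filter, Finset.mem_univ, true_and, Finset.mem_insert]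
    constructor
    · rintro ⟨h1, h2⟩
      by_cases hee : e'' = e
      · exact Or.inl hee
      · exact Or.inr ⟨h1, hser.2.2 e'' (h1.trans he.symm) (lt_of_le_of_ne h2 (Ne.symm hee))⟩
    · rintro (rfl | ⟨h1, h2⟩)
      · exact ⟨he, le_rfl⟩
      · exact ⟨h1, le_of_lt (lt_of_lt_of_le hser.2.1 h2)⟩
  have hne : e ∉ Finset.univ.filter (fun e' => rE e' = u ∧ f' ≤ e') := by
    simp only [Finset.mem_filter, Finset.mem_univ, true_and, not_and]
    intro _
    exact not_le_of_gt hser.2.1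
  rw [Rsum, hset, Finset.sum_insert hne, Rsum]

open Classical in
lemma Rsum_min {e : ℰ} {u : 𝒱} (he : rE e = u) (hm : FibMin rE e) (k : ℕ) :
    Rsum sE rE nv k u e = lcount sE rE nv (k + 1) u := by
  have h1 : lcount sE rE nv (k+1) u
      = ∑ e' ∈ Finset.univ.filter (fun e' => rE e' = u), lcount sE rE nv k (sE e') := by
    rw [show lcount sE rE nv (k+1) u = ∑ e : ℰ, if rE e = u then lcount sE rE nv k (sE e) else 0
      from rfl, Finset.sum_filter]
  have h2 : Finset.univ.filter (fun e' => rE e' = u ∧ e ≤ e')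
      = Finset.univ.filter (fun e' => rE e' = u) := by
    ext e''
    simp only [Finset.mem_filter, Finset.mem_univ, true_and, and_iff_left_iff_imp]
    intro h
    exact hm e'' (h.trans he.symm)
  rw [Rsum, h2, h1]

open Classical in
lemma Rsum_card_lt {e f' : ℰ} {u : 𝒱} (he : rE e = u) (hser : Serial rE e f') :
    (Finset.univ.filter (fun e'' => rE e'' = u ∧ f' < e'')).card
      < (Finset.univ.filter (fun e'' => rE e'' = u ∧ e < e'')).card := by
  apply Finset.card_lt_card
  constructor
  · intro e'' h
    simp only [Finset.mem_filter, Finset.mem_univ, true_and] at h ⊢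
    exact ⟨h.1, lt_trans hser.2.1 h.2⟩
  · intro hsub
    have : f' ∈ Finset.univ.filter (fun e'' => rE e'' = u ∧ e < e'') := by
      simp only [Finset.mem_filter, Finset.mem_univ, true_and]
      exact ⟨hser.1.trans he, hser.2.1⟩
    have := hsub this
    simp only [Finset.mem_filter, Finset.mem_univ, true_and] at this
    exact lt_irrefl f' this.2

end Count

section Tower
set_option linter.unusedSectionVars false
set_option maxHeartbeats 1000000
variable {𝒱 ℰ : Type} [Fintype ℰ] [DecidableEq 𝒱] [PartialOrder ℰ] {sE rE : ℰ → 𝒱} {nv : 𝒱 → ℕ}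

/-- `y` is the top of the tower over `x` at level `k + 1`. -/
def TowerTop (sE rE : ℰ → 𝒱) (nv : 𝒱 → ℕ) (k : ℕ) (x y : PathSp ℰ sE rE nv) : Prop :=
  ((y.1.1.2 : ℕ) + 1 = nv y.1.1.1) ∧ (∀ i, i < k → FibMax rE (y.1.2 i)) ∧
    (∀ i, k ≤ i → y.1.2 i = x.1.2 i) ∧ vAt sE rE nv y k = vAt sE rE nv x k

lemma tower (hr : Function.Surjective rE) (hnv : ∀ v, 0 < nv v)
    {ψ : PathSp ℰ sE rE nv → PathSp ℰ sE rE nv}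
    (hsucc : ∀ p, ¬ IsMaxPath sE rE nv p → Succ sE rE nv p (ψ p)) :
    ∀ k : ℕ, ∀ x : PathSp ℰ sE rE nv, (x.1.1.2 : ℕ) = 0 →
      (∀ i, i < k → FibMin rE (x.1.2 i)) →
      TowerTop sE rE nv k x (ψ^[lcount sE rE nv k (vAt sE rE nv x k) - 1] x) := by
  intro k
  induction k with
  | zero =>
    intro x h0 _
    have hcnt : lcount sE rE nv 0 (vAt sE rE nv x 0) = nv x.1.1.1 := rfl
    rw [hcnt]
    obtain ⟨h1, h2, h3⟩ := incr hsucc x (nv x.1.1.1 - 1) (by have := hnv x.1.1.1; omega)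
    have h4 : nv (ψ^[nv x.1.1.1 - 1] x).1.1.1 = nv x.1.1.1 := congrArg nv h1
    refine ⟨by have := hnv x.1.1.1; omega, by omega, fun i _ => congrFun h3 i, h1⟩
  | succ k ih =>
    intro x h0 hminpref
    classical
    have hu' : vAt sE rE nv x (k+1) = rE (x.1.2 k) := rfl
    set u := vAt sE rE nv x (k+1) with hu
    have inner : ∀ n (e : ℰ), rE e = u →
        (Finset.univ.filter (fun e'' => rE e'' = u ∧ e < e'')).card ≤ n →
        ∀ x' : PathSp ℰ sE rE nv, (x'.1.1.2 : ℕ) = 0 →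
          (∀ i, i < k → FibMin rE (x'.1.2 i)) → x'.1.2 k = e →
          TowerTop sE rE nv (k+1) x' (ψ^[Rsum sE rE nv k u e - 1] x') := by
      intro n
      induction n using Nat.strong_induction_on with
      | _ n ihn =>
        intro e he hcard x' h0' hmin' hek
        classical
        have hx'k : vAt sE rE nv x' k = sE e := by rw [vAt_eq_sE, hek]
        obtain ⟨hi₁, hmax₁, hpres₁, hvat₁⟩ := ih x' h0' hmin'
        set c₁ := lcount sE rE nv k (vAt sE rE nv x' k) with hc₁
        set y₁ := ψ^[c₁ - 1] x' with hy₁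
        have hy₁k : y₁.1.2 k = e := by rw [hpres₁ k le_rfl, hek]
        by_cases hfm : FibMax rE e
        · have hR : Rsum sE rE nv k u e = c₁ := by
            rw [Rsum_max he hfm, hc₁, hx'k]
          rw [hR]
          refine ⟨hi₁, ?_, fun i hi => hpres₁ i (by omega), ?_⟩
          · intro i hi
            rcases Nat.lt_succ_iff_lt_or_eq.mp hi with h | h
            · exact hmax₁ i h
            · subst h; rw [hy₁k]; exact hfm
          · show rE (y₁.1.2 k) = rE (x'.1.2 k)
            rw [hy₁k, hek]
        · have hynm : ¬ IsMaxPath sE rE nv y₁ := fun hc => hfm (by rw [← hy₁k]; exact hc.2 k)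
          obtain ⟨hq0, hqmin, hser, habove⟩ :=
            succ_data hsucc y₁ hynm hi₁ k hmax₁ (by rw [hy₁k]; exact hfm)
          set f' := (ψ y₁).1.2 k with hf'
          have hserf : Serial rE e f' := by rw [← hy₁k]; exact hser
          have hrf' : rE f' = u := hserf.1.trans he
          have hMlt := Rsum_card_lt he hserf
          obtain ⟨hi₂, hmax₂, hpres₂, hvat₂⟩ :=
            ihn (Finset.univ.filter (fun e'' => rE e'' = u ∧ f' < e'')).card
              (lt_of_lt_of_le hMlt hcard) f' hrf' le_rfl (ψ y₁) hq0 hqmin rfl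
          have hRe : Rsum sE rE nv k u e = c₁ + Rsum sE rE nv k u f' := by
            rw [Rsum_step he hserf, hc₁, hx'k]
          have hc₁pos : 0 < c₁ := lcount_pos hr hnv _ _
          have hRf'pos : 0 < Rsum sE rE nv k u f' := Rsum_pos hr hnv hrf' k
          have hiter : ψ^[Rsum sE rE nv k u e - 1] x'
              = ψ^[Rsum sE rE nv k u f' - 1] (ψ y₁) := by
            have harith : Rsum sE rE nv k u e - 1
                = (Rsum sE rE nv k u f' - 1) + 1 + (c₁ - 1) := by omega
            rw [harith, Function.iterate_add_apply, Function.iterate_add_apply,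
              Function.iterate_one, ← hy₁]
          rw [hiter]
          refine ⟨hi₂, hmax₂, ?_, ?_⟩
          · intro i hi
            rw [hpres₂ i hi, habove i (by omega), hpres₁ i (by omega)]
          · show vAt sE rE nv (ψ^[Rsum sE rE nv k u f' - 1] (ψ y₁)) (k+1) = rE (x'.1.2 k)
            have h5 : vAt sE rE nv (ψ y₁) (k+1) = rE f' := rfl
            rw [hvat₂, h5, hserf.1, hek]
    have hfmin : FibMin rE (x.1.2 k) := hminpref k (by omega)
    have := inner _ (x.1.2 k) rfl le_rfl x h0 (fun i hi => hminpref i (by omega)) rfl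
    rwa [Rsum_min hu'.symm hfmin] at this

end Tower

section Cont
set_option linter.unusedSectionVars false
set_option maxHeartbeats 1000000
variable {𝒱 ℰ : Type} [PartialOrder ℰ] [TopologicalSpace ℰ] [DiscreteTopology ℰ]
  {sE rE : ℰ → 𝒱} {nv : 𝒱 → ℕ}

/-- The approximating sequence of edges: `m` loops `e_w`, then the chain `c 0, …, c r`,
then the non-maximal edge `f`, then an arbitrary continuation `cont`. -/
def Eseq (e_w f : ℰ) (c cont : ℕ → ℰ) (r m : ℕ) : ℕ → ℰ := fun i =>
  if i < m then e_w
  else if i < m + r + 1 then c (i - m)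
  else if i = m + r + 1 then f
  else cont (i - (m + r + 2))

lemma Eseq_lt {e_w f : ℰ} {c cont : ℕ → ℰ} {r m i : ℕ} (h : i < m) :
    Eseq e_w f c cont r m i = e_w := if_pos h

lemma Eseq_mid {e_w f : ℰ} {c cont : ℕ → ℰ} {r m i : ℕ} (h1 : m ≤ i) (h2 : i < m + r + 1) :
    Eseq e_w f c cont r m i = c (i - m) := by
  rw [Eseq, if_neg (by omega), if_pos h2]

lemma Eseq_f {e_w f : ℰ} {c cont : ℕ → ℰ} {r m : ℕ} :
    Eseq e_w f c cont r m (m + r + 1) = f := by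
  rw [Eseq, if_neg (by omega), if_neg (by omega), if_pos rfl]

lemma Eseq_tail {e_w f : ℰ} {c cont : ℕ → ℰ} {r m i : ℕ} (h : m + r + 1 < i) :
    Eseq e_w f c cont r m i = cont (i - (m + r + 2)) := by
  rw [Eseq, if_neg (by omega), if_neg (by omega), if_neg (by omega)]

lemma Eseq_base {e_w f : ℰ} {c cont : ℕ → ℰ} {r m : ℕ}
    (hc0 : sE (c 0) = sE e_w) : sE (Eseq e_w f c cont r m 0) = sE e_w := by
  by_cases h : 0 < m
  · rw [Eseq_lt h]
  · have hm : m = 0 := by omega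
    subst hm
    rw [Eseq_mid le_rfl (by omega)]
    exact hc0

lemma Eseq_chain {e_w f : ℰ} {c cont : ℕ → ℰ} {r m : ℕ}
    (hlw : rE e_w = sE e_w) (hc0 : sE (c 0) = sE e_w)
    (hchain : ∀ j, j < r → sE (c (j + 1)) = rE (c j))
    (hf : sE f = rE (c r))
    (hcont0 : sE (cont 0) = rE f) (hcontS : ∀ j, sE (cont (j + 1)) = rE (cont j)) :
    ∀ i, sE (Eseq e_w f c cont r m (i + 1)) = rE (Eseq e_w f c cont r m i) := by
  intro i
  by_cases h1 : i + 1 < m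
  · rw [Eseq_lt h1, Eseq_lt (by omega)]
    exact hlw.symm
  · by_cases h2 : i + 1 < m + r + 1
    · rw [Eseq_mid (by omega) h2]
      by_cases h3 : i < m
      · have : i + 1 = m := by omega
        rw [Eseq_lt h3, this, Nat.sub_self]
        rw [hc0, hlw]
      · rw [Eseq_mid (by omega) (by omega)]
        have h4 : i + 1 - m = (i - m) + 1 := by omega
        rw [h4]
        exact hchain (i - m) (by omega)
    · by_cases h5 : i + 1 = m + r + 1
      · rw [h5, Eseq_f, Eseq_mid (by omega) (by omega)]
        have h6 : i - m = r := by omega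
        rw [h6]
        exact hf
      · by_cases h7 : i = m + r + 1
        · rw [Eseq_tail (by omega), h7, Eseq_f]
          have h8 : m + r + 1 + 1 - (m + r + 2) = 0 := by omega
          rw [h8]
          exact hcont0
        · rw [Eseq_tail (by omega), Eseq_tail (by omega)]
          have h9 : i + 1 - (m + r + 2) = (i - (m + r + 2)) + 1 := by omega
          rw [h9]
          exact hcontS _

lemma cont_lemma [TopologicalSpace ((v : 𝒱) × Fin (nv v))]
    [DiscreteTopology ((v : 𝒱) × Fin (nv v))]
    (hnv : ∀ v, 0 < nv v) (hs : Function.Surjective sE)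
    {minV : 𝒱 → 𝒱}
    (hminV : ∀ v, ∃ e, rE e = v ∧ FibMin rE e ∧ minV v = sE e)
    (hmin1 : ∀ v, minV v ∈ Vmin1 sE rE)
    {ψ : PathSp ℰ sE rE nv → PathSp ℰ sE rE nv} (hcont : Continuous ψ)
    (hsucc : ∀ p, ¬ IsMaxPath sE rE nv p → Succ sE rE nv p (ψ p))
    (e_w : ℰ) (hlw : rE e_w = sE e_w) (hwmax : FibMax rE e_w)
    (r : ℕ) (c : ℕ → ℰ) (hc0 : sE (c 0) = sE e_w)
    (hchain : ∀ j, j < r → sE (c (j + 1)) = rE (c j))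
    (hcmax : ∀ j, j ≤ r → FibMax rE (c j))
    (f f' : ℰ) (hf : sE f = rE (c r)) (hfnm : ¬ FibMax rE f) (hser : Serial rE f f')
    (k : ℕ) :
    minV (sE f') = vAt sE rE nv (ψ (pmax e_w hlw (hnv (sE e_w)))) k := by
  choose nxt hnxt using hs
  obtain ⟨cont, hcont0, hcontS⟩ : ∃ cont : ℕ → ℰ,
      sE (cont 0) = rE f ∧ ∀ j, sE (cont (j + 1)) = rE (cont j) :=
    ⟨fun j => Nat.rec (motive := fun _ => ℰ) (nxt (rE f)) (fun _ e => nxt (rE e)) j, hnxt _, fun j => hnxt _⟩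
  set p : PathSp ℰ sE rE nv := pmax e_w hlw (hnv (sE e_w)) with hp
  set z : ℕ → PathSp ℰ sE rE nv := fun m =>
    ⟨⟨⟨sE e_w, ⟨nv (sE e_w) - 1, Nat.sub_lt (hnv _) Nat.one_pos⟩⟩, Eseq e_w f c cont r m⟩,
      Eseq_base hc0, Eseq_chain hlw hc0 hchain hf hcont0 hcontS⟩ with hz
  -- convergence of `z` to the maximal path `p`
  have htend : Filter.Tendsto z Filter.atTop (nhds p) := by
    rw [tendsto_subtype_rng]
    apply Filter.Tendsto.prodMk_nhds tendsto_const_nhds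
    rw [tendsto_pi_nhds]
    intro i
    refine Filter.Tendsto.congr' ?_ tendsto_const_nhds
    filter_upwards [Filter.eventually_ge_atTop (i + 1)] with m hm
    exact (Eseq_lt (by omega)).symm
  -- the target set
  have hA : IsOpen {y : PathSp ℰ sE rE nv | vAt sE rE nv y k = vAt sE rE nv (ψ p) k} := by
    cases k with
    | zero =>
      have hco : Continuous fun y : PathSp ℰ sE rE nv => y.val.1 :=
        continuous_fst.comp continuous_subtype_val
      exact hco.isOpen_preimage {a : (v : 𝒱) × Fin (nv v) | a.1 = vAt sE rE nv (ψ p) 0}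
        (isOpen_discrete _)
    | succ j =>
      have hco : Continuous fun y : PathSp ℰ sE rE nv => y.val.2 j :=
        (continuous_apply j).comp (continuous_snd.comp continuous_subtype_val)
      exact hco.isOpen_preimage {e : ℰ | rE e = vAt sE rE nv (ψ p) (j + 1)}
        (isOpen_discrete _)
  have hpA : ψ p ∈ {y : PathSp ℰ sE rE nv | vAt sE rE nv y k = vAt sE rE nv (ψ p) k} := rfl
  have hev : ∀ᶠ m in Filter.atTop,
      ψ (z m) ∈ {y : PathSp ℰ sE rE nv | vAt sE rE nv y k = vAt sE rE nv (ψ p) k} :=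
    ((hcont.tendsto p).comp htend) (hA.mem_nhds hpA)
  obtain ⟨m, hm1, hm2⟩ := ((Filter.eventually_ge_atTop (k + 1)).and hev).exists
  -- compute `vAt (ψ (z m)) k`
  have hzedge : (z m).1.2 = Eseq e_w f c cont r m := rfl
  have hznm : ¬ IsMaxPath sE rE nv (z m) := by
    intro hc
    apply hfnm
    have := hc.2 (m + r + 1)
    rwa [hzedge, Eseq_f] at this
  have hieq : ((z m).1.1.2 : ℕ) + 1 = nv (z m).1.1.1 := Nat.succ_pred_eq_of_pos (hnv _)
  have hb : ∀ i, i < m + r + 1 → FibMax rE ((z m).1.2 i) := by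
    intro i hi
    rw [hzedge]
    by_cases h1 : i < m
    · rw [Eseq_lt h1]; exact hwmax
    · rw [Eseq_mid (by omega) (by omega)]
      exact hcmax (i - m) (by omega)
  obtain ⟨hq0, hqmin, hser2, -⟩ := succ_data hsucc (z m) hznm hieq (m + r + 1) hb
    (by rw [hzedge, Eseq_f]; exact hfnm)
  rw [hzedge, Eseq_f] at hser2
  have hqk : (ψ (z m)).1.2 (m + r + 1) = f' := serial_unique hser2 hser
  have hchain2 := min_chain hminV hmin1 (ψ (z m)) (m + r + 1) hqmin k (by omega)
  have h7 : vAt sE rE nv (ψ (z m)) (m + r + 1) = sE f' := by rw [vAt_eq_sE, hqk]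
  rw [← h7, ← hchain2]
  exact hm2

end Cont


set_option maxHeartbeats 1000000 in
/-- Every straight stationary Bratteli–Vershik model has the nesting property:
for every level and every vertex `v` there, the image of the base `B(v)` under
`ψ^{l(v)}` is contained in a single base at the previous level. -/
theorem stmt13 {𝒱 ℰ : Type} [Fintype 𝒱] [Fintype ℰ] [DecidableEq 𝒱] [PartialOrder ℰ]
    [TopologicalSpace ℰ] [DiscreteTopology ℰ]
    (sE rE : ℰ → 𝒱) (nv : 𝒱 → ℕ)
    [TopologicalSpace ((v : 𝒱) × Fin (nv v))]
    [DiscreteTopology ((v : 𝒱) × Fin (nv v))]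
    (hr : Function.Surjective rE) (hs : Function.Surjective sE)
    (hnv : ∀ v, 0 < nv v)
    (hcomp : ∀ e e' : ℰ, rE e = rE e' ↔ (e ≤ e' ∨ e' ≤ e))
    (maxV minV : 𝒱 → 𝒱)
    (hmaxV : ∀ v, ∃ e, rE e = v ∧ FibMax rE e ∧ maxV v = sE e)
    (hminV : ∀ v, ∃ e, rE e = v ∧ FibMin rE e ∧ minV v = sE e)
    (hmax1 : ∀ v, maxV v ∈ Vmax1 sE rE) (hmin1 : ∀ v, minV v ∈ Vmin1 sE rE)
    (hstrMax : ∀ p : PathSp ℰ sE rE nv, IsMaxPath sE rE nv p → ∃ e, ∀ i, p.1.2 i = e)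
    (hstrMin : ∀ p : PathSp ℰ sE rE nv, IsMinPath sE rE nv p → ∃ e, ∀ i, p.1.2 i = e)
    (ψ : PathSp ℰ sE rE nv → PathSp ℰ sE rE nv)
    (hcont : Continuous ψ)
    (him : ψ '' {p | IsMaxPath sE rE nv p} = {p | IsMinPath sE rE nv p})
    (hsucc : ∀ p, ¬ IsMaxPath sE rE nv p → Succ sE rE nv p (ψ p)) :
    (∀ v : 𝒱, ψ^[lcount sE rE nv 0 v] '' Bset sE rE nv 0 v ⊆ Set.univ) ∧
    (∀ k : ℕ, ∀ v : 𝒱, ∃ v' : 𝒱,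
      ψ^[lcount sE rE nv (k + 1) v] '' Bset sE rE nv (k + 1) v ⊆
        Bset sE rE nv k v') := by
  constructor
  · intro v
    exact Set.subset_univ _
  · intro k v
    obtain ⟨e_w, hsw, hrw, hfw⟩ := hmax1 v
    have hlw : rE e_w = sE e_w := hrw.trans hsw.symm
    set p : PathSp ℰ sE rE nv := pmax e_w hlw (hnv (sE e_w)) with hpdef
    refine ⟨vAt sE rE nv (ψ p) k, ?_⟩
    rintro - ⟨x, hx, rfl⟩
    obtain ⟨hx0, hxmin, hxv⟩ := hx
    have htt := tower hr hnv hsucc (k + 1) x hx0 hxmin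
    rw [hxv] at htt
    have hl1 : lcount sE rE nv (k + 1) v = (lcount sE rE nv (k + 1) v - 1) + 1 := by
      have := lcount_pos (sE := sE) (nv := nv) hr hnv (k + 1) v
      omega
    rw [hl1, Function.iterate_succ_apply']
    set y := ψ^[lcount sE rE nv (k + 1) v - 1] x with hy
    obtain ⟨hyi, hymax, hypres, hyvat⟩ := htt
    rw [hxv] at hyvat
    have hyv : rE (y.1.2 k) = v := hyvat
    by_cases hmy : IsMaxPath sE rE nv y
    · -- `y` is the maximal path `p`
      obtain ⟨e, hce⟩ := hstrMax y hmy
      have hre : rE e = v := by rw [← hce k]; exact hyv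
      have hse : sE e = rE e := by
        have h1 := y.2.2 k
        rwa [hce (k + 1), hce k] at h1
      have hfme : FibMax rE e := by have := hmy.2 k; rwa [hce k] at this
      obtain ⟨g, hg1, hg2, hg3⟩ := hmaxV v
      have hge : g = e := fibMax_unique hg2 hfme (hg1.trans hre.symm)
      have hmvv : maxV v = v := by rw [hg3, hge, hse, hre]
      have hewe : e_w = e := fibMax_unique hfw hfme (by rw [hrw, hmvv, hre])
      have hyp : y = p := by
        apply Subtype.ext
        have hv1 : y.val.1.1 = sE e_w := by rw [← y.2.1, hce 0, ← hewe]
        have hnveq : nv y.val.1.1 = nv (sE e_w) := congrArg nv hv1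
        have h1 : y.val.1 = ⟨sE e_w, ⟨nv (sE e_w) - 1, Nat.sub_lt (hnv _) Nat.one_pos⟩⟩ := by
          refine Sigma.ext hv1 ((Fin.heq_ext_iff hnveq).2 ?_)
          have := hyi
          simp only []
          omega
        have h2 : y.val.2 = fun _ => e_w := funext fun i => (hce i).trans hewe.symm
        exact Prod.ext h1 h2
      rw [hyp]
      have hminp : IsMinPath sE rE nv (ψ p) := by
        have hmem : ψ p ∈ ψ '' {q | IsMaxPath sE rE nv q} :=
          ⟨p, isMaxPath_pmax hlw (hnv _) hfw, rfl⟩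
        rwa [him] at hmem
      exact ⟨hminp.1, fun i _ => hminp.2 i, rfl⟩
    · -- successor case
      have hsy := hsucc y hmy
      rcases hsy with h1 | h2
      · exfalso; have := h1.1; omega
      obtain ⟨-, k₀, hbmax, hbnm, -, -, -, -⟩ := h2
      have hk₀ : k + 1 ≤ k₀ := by
        by_contra h
        exact hbnm (hymax k₀ (by omega))
      obtain ⟨hq0, hqmin, hser, -⟩ := succ_data hsucc y hmy hyi k₀ hbmax hbnm
      obtain ⟨g, hg1, hg2, hg3⟩ := hmaxV v
      set r := k₀ - (k + 1) with hrdef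
      set c : ℕ → ℰ := fun j => if j = 0 then g else y.1.2 (k + j) with hcdef
      have hc0 : sE (c 0) = sE e_w := by
        show sE (if 0 = 0 then g else _) = sE e_w
        rw [if_pos rfl]
        exact hg3.symm.trans hsw.symm
      have hchainc : ∀ j, j < r → sE (c (j + 1)) = rE (c j) := by
        intro j hj
        by_cases hj0 : j = 0
        · subst hj0
          show sE (if 1 = 0 then g else y.1.2 (k + 1)) = rE (if 0 = 0 then g else _)
          rw [if_neg one_ne_zero, if_pos rfl, y.2.2 k, hyv, hg1]
        · show sE (if j + 1 = 0 then g else y.1.2 (k + (j + 1)))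
            = rE (if j = 0 then g else y.1.2 (k + j))
          rw [if_neg (Nat.succ_ne_zero j), if_neg hj0, show k + (j + 1) = (k + j) + 1 by omega]
          exact y.2.2 (k + j)
      have hcmaxc : ∀ j, j ≤ r → FibMax rE (c j) := by
        intro j hj
        by_cases hj0 : j = 0
        · subst hj0
          show FibMax rE (if 0 = 0 then g else _)
          rw [if_pos rfl]; exact hg2
        · show FibMax rE (if j = 0 then g else y.1.2 (k + j))
          rw [if_neg hj0]
          exact hbmax (k + j) (by omega)
      have hfc : sE (y.1.2 k₀) = rE (c r) := by
        by_cases hr0 : r = 0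
        · rw [hr0]
          show sE (y.1.2 k₀) = rE (if 0 = 0 then g else _)
          rw [if_pos rfl, hg1, show k₀ = k + 1 by omega]
          exact (y.2.2 k).trans hyv
        · show sE (y.1.2 k₀) = rE (if r = 0 then g else y.1.2 (k + r))
          rw [if_neg hr0, show k₀ = (k + r) + 1 by omega]
          exact y.2.2 (k + r)
      have hkey := cont_lemma hnv hs hminV hmin1 hcont hsucc e_w hlw hfw r c hc0 hchainc
        hcmaxc (y.1.2 k₀) ((ψ y).1.2 k₀) hfc hbnm hser k
      refine ⟨hq0, fun i hi => hqmin i (by omega), ?_⟩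
      have hmc := min_chain hminV hmin1 (ψ y) k₀ hqmin k (by omega)
      have h7 : vAt sE rE nv (ψ y) k₀ = sE ((ψ y).1.2 k₀) := vAt_eq_sE _ _
      rw [hmc, h7, hkey]
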